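/- arXiv:2312.11744 — 3 statements merged into one kernel-verified Lean document; each statement's English description precedes it below -/
import Mathlib

section
/- Let G be a simple graph on n vertices with m edges, and let k ≥ 2 be an integer with χ_ℓ(G) ≤ k. If m ≤ (k−1)n, then the list color function satisfies P_ℓ(G, k) ≥ k^{n − m/(k−1)}. -/
/-!
The graph polynomial `∏_{uv ∈ E} (x_u - x_v)` has degree at most `m` and is nonzero exactly at
the proper colorings, and `χ_ℓ(G) ≤ k` says that it does not vanish on the grid `∏ L(v)`.
The count is an Alon–Füredi type bound: a polynomial `P` not vanishing on a grid `∏ S_i` with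
`|S_i| ≤ k` is nonzero at no fewer than `k ^ ((∑ (|S_i| - 1) - deg P) / (k - 1))` of its points.
By induction on the number of variables: first reduce `P` modulo the `∏_{a ∈ S_i} (x_i - a)`, so
that `deg_{x_i} P < |S_i|`, and expand in `x_0` with leading coefficient `c` of degree `j`.
By the combinatorial Nullstellensatz `c` does not vanish on the remaining grid; each point where
`c ≠ 0` extends in at least `|S_0| - j` ways, and `deg c ≤ deg P - j`. Concavity gives
`|S_0| - j ≥ k ^ ((|S_0| - j - 1) / (k - 1))`, which is what makes the bound multiply up.
-/

open Finset Fintype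

namespace MonomialOrder

variable {σ R : Type*} [CommRing R] [Nontrivial R]

theorem degree_prod_X_sub_C (m : MonomialOrder σ) (i : σ) (S : Finset R) :
    m.degree (∏ a ∈ S, (MvPolynomial.X i - MvPolynomial.C a)) = Finsupp.single i #S := by
  rw [degree_prod_of_regular fun a _ ↦ by rw [m.monic_X_sub_C]; exact isRegular_one]
  simp [m.degree_X_sub_C]

end MonomialOrder

namespace Polynomial

theorem card_sub_natDegree_le_card_filter_eval_ne_zero {R : Type*} [CommRing R] [IsDomain R]
    [DecidableEq R] {u : R[X]} (hu : u ≠ 0) (S : Finset R) :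
    #S - u.natDegree ≤ #{a ∈ S | u.eval a ≠ 0} := by
  have hroots : #{a ∈ S | u.eval a = 0} ≤ u.natDegree :=
    card_le_degree_of_subset_roots fun a ha ↦ by
      simp only [Finset.filter_val, Multiset.mem_filter] at ha
      exact (mem_roots hu).2 ha.2
  simp only [ne_eq]
  have := card_filter_add_card_filter_not (s := S) (p := fun a ↦ u.eval a = 0)
  omega

end Polynomial

theorem Finset.card_filter_piFinset_succ {α : Type*} [DecidableEq α] {n : ℕ}
    (S : Fin (n + 1) → Finset α) (p : (Fin (n + 1) → α) → Prop) [DecidablePred p] :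
    #{x ∈ piFinset S | p x} = ∑ y ∈ piFinset (Fin.tail S), #{a ∈ S 0 | p (Fin.cons a y)} := by
  have := filter_piFinset_eq_map_consEquiv S (fun _ ↦ True)
  rw [filter_true_of_mem fun _ _ ↦ trivial, filter_true_of_mem fun _ _ ↦ trivial] at this
  rw [this, filter_map, card_map, card_filter, sum_product_right]
  simp_rw [card_filter]
  rfl

theorem Real.rpow_div_sub_one_le {k y : ℝ} (hk : 1 < k) (hy : 1 ≤ y) (hyk : y ≤ k) :
    k ^ ((y - 1) / (k - 1)) ≤ y := by
  have hk1 : 0 < k - 1 := by linarith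
  have := rpow_one_add_le_one_add_mul_self (s := k - 1) (by linarith)
    (p := (y - 1) / (k - 1)) (div_nonneg (by linarith) hk1.le) ((div_le_one hk1).2 (by linarith))
  rwa [add_sub_cancel, div_mul_cancel₀ _ hk1.ne', add_sub_cancel] at this

namespace MvPolynomial

variable {R : Type*} [CommRing R]

theorem exists_totalDegree_le_degreeOf_lt_eval_eq [Nontrivial R] {σ : Type*} [LinearOrder σ]
    [WellFoundedGT σ] (S : σ → Finset R) (hS : ∀ i, (S i).Nonempty) (P : MvPolynomial σ R) :
    ∃ Q : MvPolynomial σ R, Q.totalDegree ≤ P.totalDegree ∧ (∀ i, Q.degreeOf i < #(S i)) ∧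
      ∀ x : σ → R, (∀ i, x i ∈ S i) → eval x Q = eval x P := by
  set b : σ → MvPolynomial σ R := fun i ↦ ∏ a ∈ S i, (X i - C a)
  obtain ⟨g, Q, hPQ, hg, hQ⟩ := MonomialOrder.degLex.div (b := b) (fun i ↦ by
    rw [(MonomialOrder.Monic.prod fun a _ ↦
      MonomialOrder.degLex.monic_X_sub_C i a).leadingCoeff_eq_one]
    exact isUnit_one) P
  have hcomb : (Finsupp.linearCombination (MvPolynomial σ R) b g).totalDegree ≤
      P.totalDegree := by
    rw [Finsupp.linearCombination_apply]
    refine (totalDegree_finsetSum _ _).trans (Finset.sup_le fun i _ ↦ ?_)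
    dsimp only
    rw [smul_eq_mul, mul_comm]
    exact degLex_totalDegree_monotone (hg i)
  refine ⟨Q, ?_, fun i ↦ ?_, fun x hx ↦ ?_⟩
  · rw [eq_sub_of_add_eq' hPQ.symm]
    exact (totalDegree_sub _ _).trans (max_le le_rfl hcomb)
  · rw [degreeOf_lt_iff (hS i).card_pos]
    intro c hc
    simpa [b, MonomialOrder.degree_prod_X_sub_C, Finsupp.single_le_iff] using hQ c hc i
  · have hb : ∀ i, eval x (b i) = 0 := fun i ↦ by
      simp only [b, map_prod, map_sub, eval_X, eval_C]
      exact prod_eq_zero (hx i) (sub_self _)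
    simp [hPQ, Finsupp.linearCombination_apply, Finsupp.sum, hb]

variable [IsDomain R] [DecidableEq R]

theorem card_filter_eval_leadingCoeff_finSuccEquiv_mul_le {n : ℕ} (S : Fin (n + 1) → Finset R)
    (Q : MvPolynomial (Fin (n + 1)) R) :
    #{y ∈ piFinset (Fin.tail S) | eval y (finSuccEquiv R n Q).leadingCoeff ≠ 0} *
        (#(S 0) - (finSuccEquiv R n Q).natDegree) ≤
      #{x ∈ piFinset S | eval x Q ≠ 0} := by
  set q := finSuccEquiv R n Q
  have hfiber : ∀ y ∈ {y ∈ piFinset (Fin.tail S) | eval y q.leadingCoeff ≠ 0},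
      #(S 0) - q.natDegree ≤ #{a ∈ S 0 | eval (Fin.cons a y) Q ≠ 0} := by
    intro y hy
    have hdeg : (q.map (eval y)).natDegree = q.natDegree :=
      Polynomial.natDegree_map_of_leadingCoeff_ne_zero _ (mem_filter.1 hy).2
    have hne : q.map (eval y) ≠ 0 := fun h ↦ (mem_filter.1 hy).2 (by
      rw [Polynomial.leadingCoeff, ← Polynomial.coeff_map, h, Polynomial.coeff_zero])
    simpa [hdeg, eval_eq_eval_mv_eval'] using
      Polynomial.card_sub_natDegree_le_card_filter_eval_ne_zero hne (S 0)
  rw [card_filter_piFinset_succ, ← smul_eq_mul, ← sum_const]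
  exact (sum_le_sum hfiber).trans (sum_le_sum_of_subset (filter_subset _ _))

theorem rpow_le_card_filter_eval_ne_zero_fin {k : ℝ} (hk : 1 < k) :
    ∀ {n : ℕ} (S : Fin n → Finset R) (P : MvPolynomial (Fin n) R), (∀ i, #(S i) ≤ k) →
      (∃ x ∈ piFinset S, eval x P ≠ 0) →
      k ^ ((∑ i, ((#(S i) : ℝ) - 1) - P.totalDegree) / (k - 1)) ≤
        #{x ∈ piFinset S | eval x P ≠ 0}
  | 0, S, P, _, ⟨x, hx, hPx⟩ => by
      calc k ^ ((∑ i, ((#(S i) : ℝ) - 1) - P.totalDegree) / (k - 1)) ≤ 1 :=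
            Real.rpow_le_one_of_one_le_of_nonpos hk.le
              (div_nonpos_of_nonpos_of_nonneg (by simp) (by linarith))
      _ ≤ _ := by exact_mod_cast card_pos.2 ⟨x, mem_filter.2 ⟨hx, hPx⟩⟩
  | n + 1, S, P, hSk, ⟨x₀, hx₀, hPx₀⟩ => by
      obtain ⟨Q, hQP, hQS, hQeq⟩ := exists_totalDegree_le_degreeOf_lt_eval_eq S
        (fun i ↦ ⟨x₀ i, mem_piFinset.1 hx₀ i⟩) P
      have hcount : {x ∈ piFinset S | eval x P ≠ 0} = {x ∈ piFinset S | eval x Q ≠ 0} :=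
        filter_congr fun x hx ↦ by rw [hQeq x (mem_piFinset.1 hx)]
      set c := (finSuccEquiv R n Q).leadingCoeff
      set j := (finSuccEquiv R n Q).natDegree
      have hj : j < #(S 0) := (natDegree_finSuccEquiv Q).trans_lt (hQS 0)
      have hQ0 : Q ≠ 0 := by
        rintro rfl
        exact hPx₀ (by rw [← hQeq x₀ (mem_piFinset.1 hx₀)]; simp)
      have hc0 : c ≠ 0 := by simpa [c] using hQ0
      have hcdeg : (c.totalDegree : ℝ) + j ≤ P.totalDegree := by
        exact_mod_cast (totalDegree_coeff_finSuccEquiv_add_le Q j hc0).trans hQP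
      have hc : ∃ y ∈ piFinset (Fin.tail S), eval y c ≠ 0 := by
        by_contra! h
        exact hc0 (eq_zero_of_eval_zero_at_prod_finset c _
          (fun i ↦ (degreeOf_coeff_finSuccEquiv Q i j).trans_lt (hQS i.succ))
          fun y hy ↦ h y (mem_piFinset.2 hy))
      rw [hcount]
      calc k ^ ((∑ i, ((#(S i) : ℝ) - 1) - P.totalDegree) / (k - 1))
          ≤ k ^ ((∑ i, ((#(Fin.tail S i) : ℝ) - 1) - c.totalDegree) / (k - 1)) *
              k ^ ((((#(S 0) - j : ℕ) : ℝ) - 1) / (k - 1)) := by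
            rw [← Real.rpow_add (by linarith), ← add_div]
            gcongr
            · exact hk.le
            rw [Fin.sum_univ_succ, Nat.cast_sub hj.le]
            simp only [Fin.tail]
            linarith
        _ ≤ #{y ∈ piFinset (Fin.tail S) | eval y c ≠ 0} * ((#(S 0) - j : ℕ) : ℝ) := by
            gcongr
            · exact rpow_le_card_filter_eval_ne_zero_fin hk (Fin.tail S) c
                (fun i ↦ hSk i.succ) hc
            · exact Real.rpow_div_sub_one_le hk (by norm_cast; omega)
                ((Nat.cast_le.2 (Nat.sub_le _ _)).trans (hSk 0))
        _ ≤ _ := by exact_mod_cast card_filter_eval_leadingCoeff_finSuccEquiv_mul_le S Q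

theorem rpow_le_card_filter_eval_ne_zero {σ : Type*} [Fintype σ] [DecidableEq σ] {k : ℝ}
    (hk : 1 < k) (S : σ → Finset R) (P : MvPolynomial σ R) (hSk : ∀ i, #(S i) ≤ k)
    (hP : ∃ x ∈ piFinset S, eval x P ≠ 0) :
    k ^ ((∑ i, ((#(S i) : ℝ) - 1) - P.totalDegree) / (k - 1)) ≤
      #{x ∈ piFinset S | eval x P ≠ 0} := by
  set e := Fintype.equivFin σ
  obtain ⟨x, hx, hPx⟩ := hP
  have heval : ∀ y : Fin (Fintype.card σ) → R, eval y (rename e P) = eval (y ∘ e) P :=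
    fun y ↦ eval_rename _ _ _
  have hcard : #{y ∈ piFinset (S ∘ e.symm) | eval y (rename e P) ≠ 0} =
      #{x ∈ piFinset S | eval x P ≠ 0} := by
    refine card_nbij' (· ∘ e) (· ∘ e.symm) (fun y hy ↦ ?_) (fun x hx ↦ ?_)
      (fun y _ ↦ by ext; simp) (fun x _ ↦ by ext; simp)
    · simp only [mem_coe, mem_filter, mem_piFinset, heval] at hy ⊢
      exact ⟨fun i ↦ by simpa using hy.1 (e i), hy.2⟩
    · simp only [mem_coe, mem_filter, mem_piFinset, heval] at hx ⊢
      exact ⟨fun i ↦ hx.1 _, by simpa [Function.comp_def] using hx.2⟩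
  have := rpow_le_card_filter_eval_ne_zero_fin hk (S ∘ e.symm) (rename e P) (fun i ↦ hSk _)
    ⟨x ∘ e.symm, mem_piFinset.2 fun i ↦ mem_piFinset.1 hx _, by
      simpa [heval, Function.comp_def] using hPx⟩
  rwa [hcard, show (rename e P).totalDegree = P.totalDegree from totalDegree_renameEquiv e P,
    Function.comp_def, e.symm.sum_comp fun i ↦ (#(S i) : ℝ) - 1] at this

end MvPolynomial

namespace SimpleGraph

open MvPolynomial

variable {V : Type*} (G : SimpleGraph V) [Fintype G.edgeSet] (R : Type*) [CommRing R]

/-- Each edge `e` is oriented as `e.out`; the orientation only affects the sign. -/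
noncomputable def graphPolynomial : MvPolynomial V R :=
  ∏ e ∈ G.edgeFinset, (X e.out.1 - X e.out.2)

theorem totalDegree_graphPolynomial_le [Nontrivial R] :
    (G.graphPolynomial R).totalDegree ≤ #G.edgeFinset := by
  refine (totalDegree_finsetProd _ _).trans ?_
  simpa using sum_le_sum fun e (_ : e ∈ G.edgeFinset) ↦ (totalDegree_sub _ _).trans
    (max_le (totalDegree_X (R := R) e.out.1).le (totalDegree_X (R := R) e.out.2).le)

variable {G R}

theorem eval_graphPolynomial_ne_zero_iff [IsDomain R] {f : V → R} :
    eval f (G.graphPolynomial R) ≠ 0 ↔ ∀ u v, G.Adj u v → f u ≠ f v := by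
  simp only [graphPolynomial, map_prod, map_sub, eval_X, prod_ne_zero_iff, sub_ne_zero,
    mem_edgeFinset]
  constructor
  · intro h u v huv
    have hout : s((s(u, v)).out.1, (s(u, v)).out.2) = s(u, v) := (s(u, v)).out_eq
    rcases Sym2.eq_iff.1 hout with ⟨h1, h2⟩ | ⟨h1, h2⟩
    · simpa [h1, h2] using h s(u, v) huv
    · simpa [h1, h2] using (h s(u, v) huv).symm
  · intro h e he
    exact h _ _ (by rwa [← mem_edgeSet, show s(e.out.1, e.out.2) = e from e.out_eq])

end SimpleGraph

theorem stmt_7_general {V : Type} [Fintype V] [DecidableEq V] (G : SimpleGraph V)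
    [DecidableRel G.Adj]
    (n m k : ℕ) (hn : Fintype.card V = n) (hm : G.edgeFinset.card = m)
    (hk : 2 ≤ k)
    (hch : ∀ L : V → Finset ℝ, (∀ v, (L v).card = k) →
      ∃ f : V → ℝ, (∀ v, f v ∈ L v) ∧ ∀ u v, G.Adj u v → f u ≠ f v) :
    ∀ L : V → Finset ℝ, (∀ v, (L v).card = k) →
      (k : ℝ) ^ ((n : ℝ) - (m : ℝ) / ((k : ℝ) - 1)) ≤
        (Nat.card {f : V → ℝ // (∀ v, f v ∈ L v) ∧
          ∀ u v, G.Adj u v → f u ≠ f v} : ℝ) := by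
  intro L hL
  have hk1 : (1 : ℝ) < k := by exact_mod_cast hk
  obtain ⟨f, hfL, hf⟩ := hch L hL
  have hcount : Nat.card {f : V → ℝ // (∀ v, f v ∈ L v) ∧ ∀ u v, G.Adj u v → f u ≠ f v} =
      #{x ∈ piFinset L | MvPolynomial.eval x (G.graphPolynomial ℝ) ≠ 0} := by
    rw [← Fintype.card_coe, ← Nat.card_eq_fintype_card]
    exact Nat.card_congr (Equiv.subtypeEquivRight fun f ↦ by
      simp [mem_piFinset, SimpleGraph.eval_graphPolynomial_ne_zero_iff])
  have hdeg : ((G.graphPolynomial ℝ).totalDegree : ℝ) ≤ m := by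
    exact_mod_cast hm ▸ G.totalDegree_graphPolynomial_le ℝ
  have hsum : ∑ v, ((#(L v) : ℝ) - 1) = n * (k - 1) := by simp [hL, hn]; ring
  rw [hcount]
  calc (k : ℝ) ^ ((n : ℝ) - m / (k - 1))
      ≤ k ^ ((∑ v, ((#(L v) : ℝ) - 1) - (G.graphPolynomial ℝ).totalDegree) / (k - 1)) := by
        gcongr
        · exact hk1.le
        rw [hsum, le_div_iff₀ (by linarith), sub_mul, div_mul_cancel₀ _ (by linarith)]
        linarith
    _ ≤ _ := MvPolynomial.rpow_le_card_filter_eval_ne_zero hk1 L _ (fun v ↦ by simp [hL])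
        ⟨f, mem_piFinset.2 hfL, SimpleGraph.eval_graphPolynomial_ne_zero_iff.2 hf⟩

/-- If `χ_ℓ(G) ≤ k` (every `k`-assignment of real-number lists admits a
proper coloring) and `m ≤ (k-1)n`, then every `k`-assignment has at least
`k^(n - m/(k-1))` proper list colorings, i.e. `P_ℓ(G,k) ≥ k^(n - m/(k-1))`. -/
theorem stmt_7 {V : Type} [Fintype V] [DecidableEq V] (G : SimpleGraph V)
    [DecidableRel G.Adj]
    (n m k : ℕ) (hn : Fintype.card V = n) (hm : G.edgeFinset.card = m)
    (hk : 2 ≤ k)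
    (hch : ∀ L : V → Finset ℝ, (∀ v, (L v).card = k) →
      ∃ f : V → ℝ, (∀ v, f v ∈ L v) ∧ ∀ u v, G.Adj u v → f u ≠ f v)
    (hmn : (m : ℝ) ≤ ((k : ℝ) - 1) * n) :
    ∀ L : V → Finset ℝ, (∀ v, (L v).card = k) →
      (k : ℝ) ^ ((n : ℝ) - (m : ℝ) / ((k : ℝ) - 1)) ≤
        (Nat.card {f : V → ℝ // (∀ v, f v ∈ L v) ∧
          ∀ u v, G.Adj u v → f u ≠ f v} : ℝ) :=
  stmt_7_general G n m k hn hm hk hch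
end

section
/- Let k be a prime power and G a connected simple graph on n vertices with m edges with spanning tree T. Suppose (D, σ) is an S_{F_k}-labeling of G (D the canonical orientation) in which σ(e) is the identity for every e ∈ E(T). If (D, σ) has a proper coloring, then there is a polynomial f ∈ F_k[x₁,…,xₙ] of total degree at most (k−2)(m−n+1) + n − 1 such that f(a₁,…,aₙ) ≠ 0 implies (aᵢ)ᵢ is a proper coloring of (D, σ), and f is nonzero at some point of F_kⁿ. -/
/-!
For each edge `uv` (oriented `u < v`) take the factor `X_v - h_{uv}(X_u)`, where `h_{uv}` is a
polynomial interpolating `σ(u,v)`; its nonzeros are the points with `σ(u,v)(a_u) ≠ a_v`, and it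
does not vanish at the given proper coloring. On tree edges `h_{uv} = X`. Off the tree, when
`k > 2` the values of a permutation of `𝔽_k` sum to `0`, which kills the top coefficient of the
interpolant and leaves degree at most `k - 2`. When `k = 2` the non-tree factors are dropped:
two colorings proper on the spanning tree differ by a constant, and every permutation of `𝔽₂`
commutes with translations, so properness on the tree forces properness everywhere.
-/

open Finset Polynomial

namespace FiniteField

variable {F : Type*} [Field F] [Fintype F]

theorem sum_univ_eq_zero (hF : 2 < Fintype.card F) : ∑ x : F, x = 0 := by
  simpa using sum_pow_lt_card_sub_one F 1 (by omega)

/-- The interpolant `∑ c, g c * (1 - (X - c) ^ (q - 1))` has `X ^ (q - 1)`-coefficient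
`-∑ c, g c`. -/
theorem exists_natDegree_le_card_sub_two_eval_eq (g : F → F) (hg : ∑ x, g x = 0) :
    ∃ p : F[X], p.natDegree ≤ Fintype.card F - 2 ∧ ∀ x, p.eval x = g x := by
  set q := Fintype.card F
  have hq : 1 < q := Fintype.one_lt_card
  refine ⟨∑ c, C (g c) * (1 - (X - C c) ^ (q - 1)), ?_, fun x => ?_⟩
  · have hdeg : ∀ c, (C (g c) * (1 - (X - C c) ^ (q - 1))).natDegree ≤ q - 1 := fun c => by
      refine natDegree_C_mul_le _ _ |>.trans <| natDegree_sub_le _ _ |>.trans ?_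
      simp
    have hcoeff : ∀ c, (C (g c) * (1 - (X - C c) ^ (q - 1))).coeff (q - 1) = -g c := fun c => by
      have hmonic : ((X - C c) ^ (q - 1)).coeff (q - 1) = 1 := by
        have h := ((monic_X_sub_C c).pow (q - 1)).coeff_natDegree
        rwa [natDegree_pow, natDegree_X_sub_C, mul_one] at h
      rw [coeff_C_mul, coeff_sub, coeff_one, if_neg (by omega), hmonic]
      ring
    refine (natDegree_le_pred (natDegree_sum_le_of_forall_le univ _ fun c _ => hdeg c) ?_).trans
      (by omega)
    rw [finsetSum_coeff, Finset.sum_congr rfl fun c _ => hcoeff c, sum_neg_distrib, hg,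
      neg_zero]
  · rw [eval_finsetSum, Finset.sum_eq_single x]
    · simp [zero_pow (show q - 1 ≠ 0 by omega)]
    · intro c _ hc
      have : (x - c) ^ (q - 1) = 1 := pow_card_sub_one_eq_one _ (sub_ne_zero.mpr hc.symm)
      simp [this]
    · simp

theorem exists_natDegree_le_card_sub_two_eval_eq_perm (hF : 2 < Fintype.card F)
    (π : Equiv.Perm F) : ∃ p : F[X], p.natDegree ≤ Fintype.card F - 2 ∧ ∀ x, p.eval x = π x :=
  exists_natDegree_le_card_sub_two_eval_eq π
    ((Equiv.sum_comp π fun x => x).trans (sum_univ_eq_zero hF))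

theorem eq_add_one_of_ne (hF : Fintype.card F = 2) {x y : F} (h : x ≠ y) : y = x + 1 := by
  have hsq : (y - x) ^ 2 = y - x := hF ▸ pow_card (y - x)
  have : (y - x) * (y - x - 1) = 0 := by linear_combination hsq
  rcases mul_eq_zero.mp this with h0 | h1
  · exact absurd (sub_eq_zero.mp h0).symm h
  · linear_combination h1

theorem sub_eq_sub_of_ne_of_ne (hF : Fintype.card F = 2) {x y x' y' : F} (h : x ≠ y)
    (h' : x' ≠ y') : x - x' = y - y' := by
  rw [eq_add_one_of_ne hF h, eq_add_one_of_ne hF h']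
  ring

theorem perm_apply_add_of_card_eq_two (hF : Fintype.card F = 2) (π : Equiv.Perm F) (x c : F) :
    π (x + c) = π x + c := by
  rcases eq_or_ne c 0 with rfl | hc
  · simp
  · rw [eq_add_one_of_ne hF hc.symm, zero_add]
    exact eq_add_one_of_ne hF (π.injective.ne (by simp))

end FiniteField

theorem Polynomial.totalDegree_toMvPolynomial_le {R σ : Type*} [CommSemiring R] [Nontrivial R]
    (p : R[X]) (i : σ) :
    (p.toMvPolynomial i).totalDegree ≤ p.natDegree := by
  rw [toMvPolynomial, aeval_eq_sum_range]
  refine MvPolynomial.totalDegree_finsetSum_le fun j hj => ?_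
  refine (MvPolynomial.totalDegree_smul_le _ _).trans ?_
  rw [MvPolynomial.totalDegree_X_pow]
  exact Nat.lt_succ_iff.mp (mem_range.mp hj)

namespace SimpleGraph

theorem Preconnected.eq_of_forall_adj {V α : Type*} {G : SimpleGraph V} (hG : G.Preconnected)
    {f : V → α} (hf : ∀ u v, G.Adj u v → f u = f v) (u v : V) : f u = f v := by
  obtain ⟨w⟩ := hG u v
  induction w with
  | nil => rfl
  | cons h _ ih => exact (hf _ _ h).trans ih

variable {V : Type*} [Fintype V] [LinearOrder V]

-- The canonical orientation `D`: each edge is directed from its smaller to its larger end.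
def orientedEdgeFinset (G : SimpleGraph V) [DecidableRel G.Adj] : Finset (V × V) :=
  univ.filter fun p => G.Adj p.1 p.2 ∧ p.1 < p.2

variable {G T : SimpleGraph V} [DecidableRel G.Adj] [DecidableRel T.Adj]

@[simp]
theorem mem_orientedEdgeFinset {p : V × V} :
    p ∈ G.orientedEdgeFinset ↔ G.Adj p.1 p.2 ∧ p.1 < p.2 := by
  simp [orientedEdgeFinset]

theorem card_orientedEdgeFinset : #G.orientedEdgeFinset = #G.edgeFinset := by
  refine card_bij (fun p _ => s(p.1, p.2))
    (fun p hp => by simpa using (mem_orientedEdgeFinset.1 hp).1) ?_ ?_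
  · rintro ⟨u, v⟩ huv ⟨u', v'⟩ huv' h
    simp only [mem_orientedEdgeFinset] at huv huv'
    rcases Sym2.eq_iff.1 h with ⟨rfl, rfl⟩ | ⟨rfl, rfl⟩
    · rfl
    · exact absurd (huv.2.trans huv'.2) (lt_irrefl _)
  · intro e he
    induction e with
    | _ u v =>
      rw [mem_edgeFinset, mem_edgeSet] at he
      rcases he.ne.lt_or_gt with h | h
      · exact ⟨(u, v), mem_orientedEdgeFinset.2 ⟨he, h⟩, rfl⟩
      · exact ⟨(v, u), mem_orientedEdgeFinset.2 ⟨he.symm, h⟩, Sym2.eq_swap⟩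

theorem filter_orientedEdgeFinset_of_le (hTG : T ≤ G) :
    G.orientedEdgeFinset.filter (fun p => T.Adj p.1 p.2) = T.orientedEdgeFinset := by
  ext p
  simp only [mem_filter, mem_orientedEdgeFinset]
  exact ⟨fun h => ⟨h.2, h.1.2⟩, fun h => ⟨⟨hTG h.1, h.2⟩, h.1⟩⟩

theorem forall_adj_of_forall_mem_orientedEdgeFinset {P : V → V → Prop}
    (hP : ∀ u v, P u v → P v u) (h : ∀ p ∈ G.orientedEdgeFinset, P p.1 p.2) :
    ∀ u v, G.Adj u v → P u v := by
  intro u v huv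
  rcases huv.ne.lt_or_gt with hlt | hlt
  · exact h (u, v) (mem_orientedEdgeFinset.2 ⟨huv, hlt⟩)
  · exact hP _ _ (h (v, u) (mem_orientedEdgeFinset.2 ⟨huv.symm, hlt⟩))

end SimpleGraph

open SimpleGraph

section Coloring

variable {V F : Type*}

def IsProperColoring (G : SimpleGraph V) (σ : V → V → Equiv.Perm F) (a : V → F) : Prop :=
  ∀ u v, G.Adj u v → σ u v (a u) ≠ a v

theorem IsProperColoring.of_forall_mem_orientedEdgeFinset [Fintype V] [LinearOrder V]
    {G : SimpleGraph V} [DecidableRel G.Adj] {σ : V → V → Equiv.Perm F}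
    (hσ : ∀ u v, σ v u = (σ u v)⁻¹) {a : V → F}
    (h : ∀ p ∈ G.orientedEdgeFinset, σ p.1 p.2 (a p.1) ≠ a p.2) : IsProperColoring G σ a :=
  forall_adj_of_forall_mem_orientedEdgeFinset
    (fun u v huv => by rwa [hσ, Ne, Equiv.Perm.inv_eq_iff_eq, eq_comm]) h

theorem IsProperColoring.of_card_eq_two [Field F] [Fintype F] (hF : Fintype.card F = 2)
    {G T : SimpleGraph V} (hT : T.Preconnected) {σ : V → V → Equiv.Perm F} {κ a : V → F}
    (hκ : IsProperColoring G σ κ) (hκT : ∀ u v, T.Adj u v → κ u ≠ κ v)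
    (haT : ∀ u v, T.Adj u v → a u ≠ a v) : IsProperColoring G σ a := by
  intro u v huv
  have hconst : ∀ w, a u - κ u = a w - κ w := hT.eq_of_forall_adj (f := fun w => a w - κ w)
    (fun x y hxy => FiniteField.sub_eq_sub_of_ne_of_ne hF (haT x y hxy) (hκT x y hxy)) u
  have hshift : ∀ w, a w = κ w + (a u - κ u) := fun w => by rw [hconst w]; ring
  rw [hshift u, hshift v, FiniteField.perm_apply_add_of_card_eq_two hF, Ne, add_left_inj]
  exact hκ u v huv

end Coloring

section EdgeConstraintPoly

variable {V F : Type*} [Field F]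

noncomputable def edgeConstraintPoly (S : Finset (V × V)) (L : V × V → F[X]) :
    MvPolynomial V F :=
  ∏ p ∈ S, (MvPolynomial.X p.2 - (L p).toMvPolynomial p.1)

theorem eval_edgeConstraintPoly_ne_zero_iff (S : Finset (V × V)) (L : V × V → F[X])
    (a : V → F) :
    MvPolynomial.eval a (edgeConstraintPoly S L) ≠ 0 ↔ ∀ p ∈ S, (L p).eval (a p.1) ≠ a p.2 := by
  rw [edgeConstraintPoly, map_prod, prod_ne_zero_iff]
  refine forall₂_congr fun p _ => ?_
  rw [map_sub, MvPolynomial.eval_X, MvPolynomial.eval_toMvPolynomial, sub_ne_zero, ne_comm]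

theorem totalDegree_edgeConstraintPoly_le (S : Finset (V × V)) (L : V × V → F[X]) :
    (edgeConstraintPoly S L).totalDegree ≤ ∑ p ∈ S, max 1 (L p).natDegree := by
  refine (MvPolynomial.totalDegree_finsetProd _ _).trans (sum_le_sum fun p _ => ?_)
  refine (MvPolynomial.totalDegree_sub _ _).trans (max_le_max ?_ ?_)
  · exact (MvPolynomial.totalDegree_X _).le
  · exact totalDegree_toMvPolynomial_le _ _

end EdgeConstraintPoly

section ColoringPoly

variable {V F : Type*} [Fintype V] [LinearOrder V] [Field F] [Fintype F]
  {G T : SimpleGraph V} [DecidableRel T.Adj] {σ : V → V → Equiv.Perm F}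
  {κ : V → F}

theorem exists_mvPolynomial_of_two_lt_card [DecidableRel G.Adj] (hF : 2 < Fintype.card F)
    (hTG : T ≤ G) (hσ : ∀ u v, σ v u = (σ u v)⁻¹) (hTid : ∀ u v, T.Adj u v → σ u v = 1)
    (hκ : IsProperColoring G σ κ) :
    ∃ f : MvPolynomial V F,
      f.totalDegree ≤ #T.orientedEdgeFinset +
        (Fintype.card F - 2) * (#G.orientedEdgeFinset - #T.orientedEdgeFinset) ∧
      (∀ a, MvPolynomial.eval a f ≠ 0 → IsProperColoring G σ a) ∧ MvPolynomial.eval κ f ≠ 0 := by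
  choose h hdeg heval using fun p : V × V =>
    FiniteField.exists_natDegree_le_card_sub_two_eval_eq_perm hF (σ p.1 p.2)
  let L : V × V → F[X] := fun p => if T.Adj p.1 p.2 then X else h p
  have hL : ∀ a : V → F,
      MvPolynomial.eval a (edgeConstraintPoly G.orientedEdgeFinset L) ≠ 0 ↔
        ∀ p ∈ G.orientedEdgeFinset, σ p.1 p.2 (a p.1) ≠ a p.2 := fun a => by
    rw [eval_edgeConstraintPoly_ne_zero_iff]
    refine forall₂_congr fun p _ => ?_
    by_cases hp : T.Adj p.1 p.2
    · simp [L, hp, hTid _ _ hp]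
    · simp [L, hp, heval]
  refine ⟨edgeConstraintPoly G.orientedEdgeFinset L, ?_,
    fun a ha => .of_forall_mem_orientedEdgeFinset hσ ((hL a).1 ha),
    (hL κ).2 fun p hp => hκ _ _ (mem_orientedEdgeFinset.1 hp).1⟩
  calc _ ≤ ∑ p ∈ G.orientedEdgeFinset, max 1 (L p).natDegree :=
        totalDegree_edgeConstraintPoly_le _ _
    _ ≤ ∑ p ∈ G.orientedEdgeFinset, if T.Adj p.1 p.2 then 1 else Fintype.card F - 2 := by
        refine sum_le_sum fun p _ => ?_
        by_cases hp : T.Adj p.1 p.2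
        · simp [L, hp]
        · simpa [L, hp] using ⟨by omega, hdeg p⟩
    _ = _ := by
        rw [sum_ite, sum_const, sum_const, filter_orientedEdgeFinset_of_le hTG, smul_eq_mul,
          smul_eq_mul, mul_one, mul_comm, ← card_filter_add_card_filter_not (fun p : V × V =>
            T.Adj p.1 p.2) (s := G.orientedEdgeFinset), filter_orientedEdgeFinset_of_le hTG,
          Nat.add_sub_cancel_left]

theorem exists_mvPolynomial_of_card_eq_two (hF : Fintype.card F = 2) (hT : T.Preconnected)
    (hTG : T ≤ G) (hTid : ∀ u v, T.Adj u v → σ u v = 1) (hκ : IsProperColoring G σ κ) :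
    ∃ f : MvPolynomial V F, f.totalDegree ≤ #T.orientedEdgeFinset ∧
      (∀ a, MvPolynomial.eval a f ≠ 0 → IsProperColoring G σ a) ∧ MvPolynomial.eval κ f ≠ 0 := by
  have hκT : ∀ u v, T.Adj u v → κ u ≠ κ v := fun u v huv => by
    simpa [hTid u v huv] using hκ u v (hTG huv)
  refine ⟨edgeConstraintPoly T.orientedEdgeFinset fun _ => X, ?_, fun a ha => ?_, ?_⟩
  · simpa using totalDegree_edgeConstraintPoly_le T.orientedEdgeFinset fun _ => (X : F[X])
  · rw [eval_edgeConstraintPoly_ne_zero_iff] at ha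
    refine hκ.of_card_eq_two hF hT hκT ?_
    exact forall_adj_of_forall_mem_orientedEdgeFinset (fun _ _ h => h.symm) (by simpa using ha)
  · rw [eval_edgeConstraintPoly_ne_zero_iff]
    exact fun p hp => by simpa using hκT _ _ (mem_orientedEdgeFinset.1 hp).1

end ColoringPoly

theorem stmt_10_general (k n m : ℕ) (F : Type) [Field F] [Fintype F]
    (hcard : Fintype.card F = k)
    (G : SimpleGraph (Fin n)) [DecidableRel G.Adj]
    (hm : G.edgeFinset.card = m)
    (T : SimpleGraph (Fin n)) (hTG : T ≤ G) (hT : T.IsTree)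
    (σ : Fin n → Fin n → Equiv.Perm F)
    (hσ : ∀ u v, σ v u = (σ u v)⁻¹)
    (hTid : ∀ u v, T.Adj u v → σ u v = 1)
    (hex : ∃ κ : Fin n → F, ∀ u v, G.Adj u v → σ u v (κ u) ≠ κ v) :
    ∃ f : MvPolynomial (Fin n) F,
      f.totalDegree ≤ (k - 2) * (m + 1 - n) + n - 1 ∧
      (∀ a : Fin n → F, MvPolynomial.eval a f ≠ 0 →
        ∀ u v, G.Adj u v → σ u v (a u) ≠ a v) ∧
      ∃ a : Fin n → F, MvPolynomial.eval a f ≠ 0 := by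
  classical
  obtain ⟨κ, hκ⟩ := hex
  have hTcard : #T.orientedEdgeFinset + 1 = n := by
    simpa [card_orientedEdgeFinset] using hT.card_edgeFinset
  have hGcard : #G.orientedEdgeFinset = m := card_orientedEdgeFinset.trans hm
  rcases Nat.lt_or_ge 2 (Fintype.card F) with hF | hF
  · obtain ⟨f, hdeg, hf, hκf⟩ := exists_mvPolynomial_of_two_lt_card hF hTG hσ hTid hκ
    refine ⟨f, hdeg.trans ?_, hf, κ, hκf⟩
    rw [hcard, hGcard, show m - #T.orientedEdgeFinset = m + 1 - n by omega, mul_comm]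
    omega
  · obtain ⟨f, hdeg, hf, hκf⟩ := exists_mvPolynomial_of_card_eq_two
      (le_antisymm hF Fintype.one_lt_card) hT.connected.preconnected hTG hTid hκ
    exact ⟨f, hdeg.trans (by omega), hf, κ, hκf⟩

/-- Given a connected graph `G` on `Fin n` with `m` edges, a spanning tree
`T`, and an `S_{F_k}`-labeling `σ` that is the identity on tree edges, if a proper
coloring exists then there is a polynomial of total degree at most
`(k-2)(m-n+1) + n - 1` (written `(k-2)*(m+1-n) + n - 1` in `ℕ`) whose nonzeros are
proper colorings of the labeling, and which is nonzero somewhere. -/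
theorem stmt_10 (k n m : ℕ) (hpp : IsPrimePow k) (F : Type) [Field F] [Fintype F]
    (hcard : Fintype.card F = k)
    (G : SimpleGraph (Fin n)) [DecidableRel G.Adj] (hG : G.Connected)
    (hm : G.edgeFinset.card = m)
    (T : SimpleGraph (Fin n)) (hTG : T ≤ G) (hT : T.IsTree)
    (σ : Fin n → Fin n → Equiv.Perm F)
    (hσ : ∀ u v, σ v u = (σ u v)⁻¹)
    (hTid : ∀ u v, T.Adj u v → σ u v = 1)
    (hex : ∃ κ : Fin n → F, ∀ u v, G.Adj u v → σ u v (κ u) ≠ κ v) :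
    ∃ f : MvPolynomial (Fin n) F,
      f.totalDegree ≤ (k - 2) * (m + 1 - n) + n - 1 ∧
      (∀ a : Fin n → F, MvPolynomial.eval a f ≠ 0 →
        ∀ u v, G.Adj u v → σ u v (a u) ≠ a v) ∧
      ∃ a : Fin n → F, MvPolynomial.eval a f ≠ 0 :=
  stmt_10_general k n m F hcard G hm T hTG hT σ hσ hTid hex
end

section
/- Let G be a signed graph on n vertices and m edges with a fixed sign function ε, and let k be a prime power. If the signed chromatic number χ(G, ε) ≤ k and m ≤ (k−1)n, then the number of k-colorings of (G, ε) satisfies P((G, ε), k) ≥ k^{n − m/(k−1)}. -/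
/-- The traditional color set for signed graphs: `M_{2t+1} = {0, ±1, …, ±t}` and
`M_{2t} = {±1, …, ±t}`. -/
def signedColorSet (k : ℕ) : Set ℤ :=
  {a : ℤ | a.natAbs ≤ k / 2 ∧ (k % 2 = 1 ∨ a ≠ 0)}

/-!
Fix a field `F` with `k` elements and the involution `y ↦ c - y` of `F`, where `c = 1` in
characteristic `2` and `c = 0` otherwise. Like negation on `M_k`, it has at most one fixed point,
and two involutions with at most one fixed point on sets of the same size are conjugate
(their cycle types are determined by the parity of the size). So signed `k`-colorings correspond
to the `f : V → F` with `f v ≠ f u` on positive and `f v ≠ c - f u` on negative edges, i.e. to the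
non-zeros of a product of `m` affine linear forms, one per edge.

Reducing exponents modulo `x ^ k = x` neither changes the values of a polynomial nor raises its
degree, and makes every variable occur to degree at most `k - 1`. For such a polynomial of degree
`D`, not vanishing identically on `F ^ n`, an induction on `n` (Alon–Füredi style) bounds the number
of non-zeros from below by `k ^ (n - D / (k - 1))`: writing it as a polynomial of degree `e` in the
first variable, each point where the leading coefficient is non-zero lifts to at least `k - e`
non-zeros, and `k ^ (1 - e / (k - 1)) ≤ k - e` by convexity.
-/

open Finset MvPolynomial

theorem Real.rpow_one_sub_le {a s : ℝ} (ha : 0 ≤ a) (hs₀ : 0 ≤ s) (hs₁ : s ≤ 1) :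
    a ^ (1 - s) ≤ (1 - s) * a + s := by
  simpa using Real.geom_mean_le_arith_mean2_weighted (sub_nonneg.2 hs₁) hs₀ ha zero_le_one
    (by ring)

theorem Fin.card_filter_univ_eq_sum_card_filter_cons {α : Type*} [Fintype α] {n : ℕ}
    (p : (Fin (n + 1) → α) → Prop) [DecidablePred p] :
    #{x | p x} = ∑ s : Fin n → α, #{y | p (Fin.cons y s)} := by
  simp only [card_filter]
  rw [← (Fin.consEquiv fun _ => α).sum_comp, Fintype.sum_prod_type_right]
  rfl

def reduceExponent (q e : ℕ) : ℕ := if e = 0 then 0 else (e - 1) % (q - 1) + 1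

@[simp]
theorem reduceExponent_zero (q : ℕ) : reduceExponent q 0 = 0 := rfl

theorem reduceExponent_le_self (q e : ℕ) : reduceExponent q e ≤ e := by
  unfold reduceExponent
  split_ifs
  · omega
  · have := Nat.mod_le (e - 1) (q - 1); omega

theorem reduceExponent_le_sub_one {q : ℕ} (hq : 1 < q) (e : ℕ) : reduceExponent q e ≤ q - 1 := by
  unfold reduceExponent
  split_ifs
  · omega
  · have := Nat.mod_lt (e - 1) (show 0 < q - 1 by omega); omega

section FiniteField

variable {F : Type*} [Field F] [Fintype F]

theorem FiniteField.pow_reduceExponent (x : F) (e : ℕ) :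
    x ^ reduceExponent (Fintype.card F) e = x ^ e := by
  unfold reduceExponent
  split_ifs with he
  · rw [he]
  rcases eq_or_ne x 0 with rfl | hx
  · rw [zero_pow he, zero_pow (Nat.succ_ne_zero _)]
  · conv_rhs => rw [← Nat.sub_add_cancel (Nat.one_le_iff_ne_zero.2 he),
      ← Nat.div_add_mod (e - 1) (Fintype.card F - 1)]
    simp only [pow_add, pow_mul, FiniteField.pow_card_sub_one_eq_one x hx, one_pow, one_mul]

namespace MvPolynomial

variable {σ : Type*}

noncomputable def reduceDegrees (P : MvPolynomial σ F) : MvPolynomial σ F :=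
  ∑ d ∈ P.support,
    monomial (d.mapRange (reduceExponent (Fintype.card F)) (reduceExponent_zero _)) (P.coeff d)

theorem eval_reduceDegrees (P : MvPolynomial σ F) (x : σ → F) :
    eval x (reduceDegrees P) = eval x P := by
  rw [reduceDegrees, map_sum, eval_eq]
  refine sum_congr rfl fun d _ => ?_
  rw [eval_monomial, Finsupp.prod_mapRange_index fun _ => pow_zero _]
  simp only [FiniteField.pow_reduceExponent]
  rfl

theorem totalDegree_reduceDegrees_le (P : MvPolynomial σ F) :
    (reduceDegrees P).totalDegree ≤ P.totalDegree := by
  refine (totalDegree_finsetSum _ _).trans (Finset.sup_le fun d hd => ?_)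
  refine (totalDegree_monomial_le _ _).trans (le_trans ?_ (le_totalDegree hd))
  rw [Finsupp.sum_mapRange_index fun _ => rfl]
  exact sum_le_sum fun i _ => reduceExponent_le_self _ _

theorem degreeOf_reduceDegrees_le (P : MvPolynomial σ F) (i : σ) :
    (reduceDegrees P).degreeOf i ≤ Fintype.card F - 1 := by
  classical
  rw [degreeOf_le_iff]
  intro d hd
  obtain ⟨d₀, -, hd₀⟩ := mem_biUnion.1 (support_sum hd)
  rw [support_monomial] at hd₀
  split_ifs at hd₀
  · simp at hd₀
  · rw [mem_singleton.1 hd₀, Finsupp.mapRange_apply]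
    exact reduceExponent_le_sub_one Fintype.one_lt_card _

end MvPolynomial

end FiniteField

section CountingNonzeros

variable {F : Type*} [Field F] [Fintype F] [DecidableEq F]

theorem Polynomial.card_le_card_eval_ne_zero_add_natDegree {p : Polynomial F} (hp : p ≠ 0) :
    Fintype.card F ≤ #{y | p.eval y ≠ 0} + p.natDegree := by
  have hroots : #{y | p.eval y = 0} ≤ p.natDegree :=
    card_le_degree_of_subset_roots fun y hy => by
      rw [mem_roots hp]; simpa using hy
  have := card_filter_add_card_filter_not (s := univ) (fun y => p.eval y ≠ 0)
  simp only [not_not, card_univ] at this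
  omega

theorem MvPolynomial.card_le_card_eval_cons_ne_zero_add_degreeOf {n : ℕ}
    {P : MvPolynomial (Fin (n + 1)) F} {s : Fin n → F}
    (hs : eval s (finSuccEquiv F n P).leadingCoeff ≠ 0) :
    Fintype.card F ≤ #{y | eval (Fin.cons y s) P ≠ 0} + P.degreeOf 0 := by
  simp only [eval_eq_eval_mv_eval']
  set p := (finSuccEquiv F n P).map (eval s) with hp_def
  have hp : p ≠ 0 := fun h => hs <| by
    have := congrArg (·.coeff (finSuccEquiv F n P).natDegree) h
    rwa [hp_def, Polynomial.coeff_map, Polynomial.coeff_zero] at this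
  have hdeg : p.natDegree ≤ P.degreeOf 0 :=
    natDegree_finSuccEquiv P ▸ Polynomial.natDegree_map_le
  have := Polynomial.card_le_card_eval_ne_zero_add_natDegree hp
  omega

theorem MvPolynomial.rpow_le_card_eval_ne_zero_of_degreeOf_le {n : ℕ}
    {P : MvPolynomial (Fin n) F} (hP : P ≠ 0) (hdeg : ∀ i, P.degreeOf i ≤ Fintype.card F - 1)
    {D : ℝ} (hD : (P.totalDegree : ℝ) ≤ D) :
    (Fintype.card F : ℝ) ^ (n - D / (Fintype.card F - 1)) ≤ #{x | eval x P ≠ 0} := by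
  set q := Fintype.card F
  have hq₂ : 2 ≤ q := Fintype.one_lt_card
  have hq : (2 : ℝ) ≤ q := by exact_mod_cast hq₂
  induction n generalizing D with
  | zero =>
    obtain ⟨c, rfl⟩ := C_surjective (Fin 0) P
    have hc : c ≠ 0 := by rintro rfl; simp at hP
    have hD₀ : 0 ≤ D := (Nat.cast_nonneg _).trans hD
    have : #{x : Fin 0 → F | eval x (C c) ≠ 0} = 1 := by simp [hc]
    rw [this, Nat.cast_one, Nat.cast_zero, zero_sub]
    exact Real.rpow_le_one_of_one_le_of_nonpos (by linarith)
      (neg_nonpos.2 (div_nonneg hD₀ (by linarith)))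
  | succ n ih =>
    set e := P.degreeOf 0
    set Pe := (finSuccEquiv F n P).leadingCoeff
    have hPe : Pe ≠ 0 :=
      Polynomial.leadingCoeff_ne_zero.2 ((map_ne_zero_iff _ (finSuccEquiv F n).injective).2 hP)
    have he : (e : ℝ) ≤ q - 1 := by
      have : e + 1 ≤ q := by have := hdeg 0; omega
      have : (e : ℝ) + 1 ≤ q := by exact_mod_cast this
      linarith
    have hPe_deg : (Pe.totalDegree : ℝ) ≤ D - e := by
      have h : Pe.totalDegree + (finSuccEquiv F n P).natDegree ≤ P.totalDegree :=
        totalDegree_coeff_finSuccEquiv_add_le P _ hPe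
      rw [natDegree_finSuccEquiv] at h
      have : ((Pe.totalDegree + e : ℕ) : ℝ) ≤ P.totalDegree := by exact_mod_cast h
      push_cast at this
      linarith
    have IH := ih hPe hPe_deg fun j => (degreeOf_coeff_finSuccEquiv P j _).trans (hdeg j.succ)
    have hrpow : (q : ℝ) ^ (1 - (e : ℝ) / (q - 1)) ≤ q - e := by
      have hq₁ : (q : ℝ) - 1 ≠ 0 := by linarith
      have := Real.rpow_one_sub_le (a := q) (s := e / (q - 1)) (by linarith)
        (div_nonneg (Nat.cast_nonneg _) (by linarith)) ((div_le_one (by linarith)).2 he)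
      convert this using 1
      field_simp
      ring
    calc (q : ℝ) ^ ((n + 1 : ℕ) - D / (q - 1))
        = q ^ (1 - (e : ℝ) / (q - 1)) * q ^ (n - (D - e) / (q - 1)) := by
          rw [← Real.rpow_add (by linarith)]
          congr 1
          push_cast
          ring
      _ ≤ (q - e) * #{s | eval s Pe ≠ 0} :=
          mul_le_mul hrpow IH (Real.rpow_nonneg (by linarith) _) (by linarith)
      _ = ∑ s with eval s Pe ≠ 0, ((q : ℝ) - e) := by rw [sum_const, nsmul_eq_mul, mul_comm]
      _ ≤ ∑ s with eval s Pe ≠ 0, (#{y | eval (Fin.cons y s) P ≠ 0} : ℝ) :=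
          sum_le_sum fun s hs => by
            have := card_le_card_eval_cons_ne_zero_add_degreeOf (mem_filter.1 hs).2
            have : (q : ℝ) ≤ #{y | eval (Fin.cons y s) P ≠ 0} + e := by exact_mod_cast this
            linarith
      _ ≤ ∑ s, (#{y | eval (Fin.cons y s) P ≠ 0} : ℝ) :=
          sum_le_sum_of_subset_of_nonneg (filter_subset _ _) fun _ _ _ => Nat.cast_nonneg _
      _ = #{x | eval x P ≠ 0} := by
          rw [Fin.card_filter_univ_eq_sum_card_filter_cons, Nat.cast_sum]

theorem MvPolynomial.rpow_le_card_eval_ne_zero {σ : Type*} [Fintype σ] [DecidableEq σ]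
    {P : MvPolynomial σ F} (hP : ∃ x, eval x P ≠ 0) {D : ℝ} (hD : (P.totalDegree : ℝ) ≤ D) :
    (Fintype.card F : ℝ) ^ (Fintype.card σ - D / (Fintype.card F - 1)) ≤
      #{x | eval x P ≠ 0} := by
  set e := Fintype.equivFin σ
  set Q := reduceDegrees (rename e P)
  have hQ : ∀ y, eval y Q = eval (y ∘ e) P := fun y => by
    rw [eval_reduceDegrees, eval_rename]
  obtain ⟨x, hx⟩ := hP
  have hQ₀ : Q ≠ 0 := fun h => hx <| by
    simpa [hQ, Function.comp_def] using congrArg (eval (x ∘ e.symm)) h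
  have hQ_deg : (Q.totalDegree : ℝ) ≤ D := le_trans (by
    exact_mod_cast (totalDegree_reduceDegrees_le _).trans (totalDegree_rename_le _ _)) hD
  calc (Fintype.card F : ℝ) ^ (Fintype.card σ - D / (Fintype.card F - 1))
      ≤ #{y | eval y Q ≠ 0} :=
        rpow_le_card_eval_ne_zero_of_degreeOf_le hQ₀ (degreeOf_reduceDegrees_le _) hQ_deg
    _ = #{x | eval x P ≠ 0} := by
        congr 1
        refine card_equiv (e.arrowCongr (Equiv.refl F)).symm fun y => ?_
        simp only [mem_filter, mem_univ, true_and, hQ]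
        rfl

end CountingNonzeros


namespace Equiv.Perm

variable {α : Type*} [Fintype α] [DecidableEq α]

theorem cycleType_of_sq_eq_one {σ : Perm α} (hσ : σ ^ 2 = 1) :
    σ.cycleType = Multiset.replicate (#σ.support / 2) 2 := by
  have h := cycleType_of_pow_prime_eq_one hσ
  have hsum := σ.sum_cycleType
  rw [h, Multiset.sum_replicate, smul_eq_mul] at hsum
  rw [h, ← hsum, Nat.mul_div_cancel _ two_pos]

theorem card_compl_support_le_one {σ : Perm α} (hσ : (Function.fixedPoints σ).Subsingleton) :
    #σ.supportᶜ ≤ 1 :=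
  card_le_one.2 fun a ha b hb => hσ (by simpa using ha : σ a = a) (by simpa using hb : σ b = b)

theorem isConj_of_sq_eq_one {σ τ : Perm α} (hσ : σ ^ 2 = 1) (hτ : τ ^ 2 = 1)
    (hσ₁ : (Function.fixedPoints σ).Subsingleton) (hτ₁ : (Function.fixedPoints τ).Subsingleton) :
    IsConj σ τ := by
  rw [isConj_iff_cycleType_eq, cycleType_of_sq_eq_one hσ, cycleType_of_sq_eq_one hτ]
  have hfix : #σ.supportᶜ = #τ.supportᶜ := by
    have hσ₂ := card_compl_support_modEq (p := 2) (n := 1) (σ := σ) (by rwa [pow_one])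
    have hτ₂ := card_compl_support_modEq (p := 2) (n := 1) (σ := τ) (by rwa [pow_one])
    have := card_compl_support_le_one hσ₁
    have := card_compl_support_le_one hτ₁
    unfold Nat.ModEq at hσ₂ hτ₂
    omega
  rw [card_compl, card_compl] at hfix
  have := card_le_univ σ.support
  have := card_le_univ τ.support
  congr 2
  omega

end Equiv.Perm

theorem Function.Involutive.exists_equiv_comm {α β : Type*} [Finite α] [Finite β]
    {i : α → α} {j : β → β} (hi : Function.Involutive i) (hj : Function.Involutive j)
    (hi₁ : (Function.fixedPoints i).Subsingleton) (hj₁ : (Function.fixedPoints j).Subsingleton)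
    (hcard : Nat.card α = Nat.card β) : ∃ e : α ≃ β, ∀ a, e (i a) = j (e a) := by
  classical
  have := Fintype.ofFinite α
  have := Fintype.ofFinite β
  obtain ⟨e₀⟩ := Finite.card_eq.1 hcard
  set σ := e₀.permCongr hi.toPerm
  have hσ : σ ^ 2 = 1 := by ext; simp [σ, sq, hi _]
  have hσ₁ : (Function.fixedPoints σ).Subsingleton := fun a ha b hb => by
    simp only [σ, mem_fixedPoints, IsFixedPt, Equiv.permCongr_apply,
      Involutive.coe_toPerm] at ha hb
    exact e₀.symm.injective <| hi₁ (e₀.symm_apply_eq.2 ha.symm).symm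
      (e₀.symm_apply_eq.2 hb.symm).symm
  have hτ : hj.toPerm ^ 2 = 1 := by ext; simp [sq, hj _]
  obtain ⟨c, hc⟩ := isConj_iff.1 (Equiv.Perm.isConj_of_sq_eq_one hσ hτ hσ₁ hj₁)
  refine ⟨e₀.trans c, fun a => ?_⟩
  simpa [σ] using congrArg (· (c (e₀ a))) hc

theorem neg_mem_signedColorSet {k : ℕ} {a : ℤ} (ha : a ∈ signedColorSet k) :
    -a ∈ signedColorSet k := by
  simpa [signedColorSet] using ha

def negSignedColor {k : ℕ} (a : signedColorSet k) : signedColorSet k :=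
  ⟨-a, neg_mem_signedColorSet a.2⟩

theorem involutive_negSignedColor (k : ℕ) : Function.Involutive (negSignedColor (k := k)) :=
  fun a => Subtype.ext (neg_neg a.1)

theorem subsingleton_fixedPoints_negSignedColor (k : ℕ) :
    (Function.fixedPoints (negSignedColor (k := k))).Subsingleton := fun a ha b hb => by
  have ha : -a.1 = a.1 := congrArg Subtype.val ha
  have hb : -b.1 = b.1 := congrArg Subtype.val hb
  exact Subtype.ext (by omega)

theorem signedColorSet_eq_coe (k : ℕ) : signedColorSet k =
    ↑({a ∈ Icc (-(k / 2 : ℕ) : ℤ) (k / 2 : ℕ) | k % 2 = 1 ∨ a ≠ 0}) := by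
  ext a
  simp only [signedColorSet, Set.mem_ofPred_eq, coe_filter, mem_Icc]
  omega

instance (k : ℕ) : Finite (signedColorSet k) := by
  rw [signedColorSet_eq_coe]
  infer_instance

theorem Nat.card_signedColorSet (k : ℕ) : Nat.card (signedColorSet k) = k := by
  rw [signedColorSet_eq_coe, Nat.card_coe_set_eq, Set.ncard_coe_finset]
  rcases Nat.mod_two_eq_zero_or_one k with hk | hk
  · simp only [hk, zero_ne_one, false_or]
    rw [filter_ne', card_erase_of_mem (by simp; omega), Int.card_Icc]
    omega
  · rw [filter_true_of_mem fun _ _ => Or.inl hk, Int.card_Icc]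
    omega

namespace SimpleGraph

variable {V : Type*} (G : SimpleGraph V) (ε : V → V → ℤ)

def IsSignedColoring {C : Type*} (ι : C → C) (f : V → C) : Prop :=
  ∀ u v, G.Adj u v → f v ≠ if ε u v = 1 then f u else ι (f u)

def signedColoringsCongr {C D : Type*} {ι : C → C} {ι' : D → D} (e : C ≃ D)
    (he : ∀ c, e (ι c) = ι' (e c)) :
    {f : V → C // G.IsSignedColoring ε ι f} ≃ {f : V → D // G.IsSignedColoring ε ι' f} :=
  (Equiv.arrowCongr (.refl V) e).subtypeEquiv fun f =>
    forall₂_congr fun u v => imp_congr_right fun _ => by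
      show _ ↔ e (f v) ≠ if ε u v = 1 then e (f u) else ι' (e (f u))
      rw [← he, ← apply_ite e, e.injective.ne_iff]

variable {F : Type*} [Field F]

noncomputable def signedEdgePoly (c : F) (u v : V) : MvPolynomial V F :=
  X v - if ε u v = 1 then X u else C c - X u

noncomputable def signedGraphPoly [Fintype G.edgeSet] (c : F) : MvPolynomial V F :=
  ∏ e ∈ G.edgeFinset, signedEdgePoly ε c e.out.1 e.out.2

variable {G ε}

def signedColoringsEquiv (hval : ∀ u v, G.Adj u v → ε u v = 1 ∨ ε u v = -1) (k : ℕ) :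
    {κ : V → ℤ // (∀ v, κ v ∈ signedColorSet k) ∧ ∀ u v, G.Adj u v → κ v ≠ ε u v * κ u} ≃
      {f : V → signedColorSet k // G.IsSignedColoring ε negSignedColor f} :=
  (Equiv.subtypeSubtypeEquivSubtypeInter _ _).symm.trans <|
    Equiv.subtypePiEquivPi.subtypeEquiv fun κ =>
      forall₂_congr fun u v => forall_congr' fun h => by
        rcases hval u v h with h₁ | h₁ <;>
          simp [h₁, negSignedColor, Subtype.ext_iff] <;> exact Iff.rfl

theorem eval_signedEdgePoly_ne_zero_iff (c : F) (f : V → F) (u v : V) :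
    eval f (signedEdgePoly ε c u v) ≠ 0 ↔ f v ≠ if ε u v = 1 then f u else c - f u := by
  rw [signedEdgePoly, ne_eq, map_sub, sub_eq_zero, apply_ite (eval f)]
  simp

theorem signedEdge_comm (hsym : ∀ u v, ε u v = ε v u) (c : F) (f : V → F) (u v : V) :
    (f v ≠ if ε u v = 1 then f u else c - f u) ↔ (f u ≠ if ε v u = 1 then f v else c - f v) := by
  rw [hsym]
  split_ifs
  · exact ne_comm
  · constructor <;> intro h h' <;> apply h <;> rw [h'] <;> ring

theorem eval_signedGraphPoly_ne_zero_iff [Fintype G.edgeSet] (hsym : ∀ u v, ε u v = ε v u)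
    (c : F) (f : V → F) :
    eval f (G.signedGraphPoly ε c) ≠ 0 ↔ G.IsSignedColoring ε (c - ·) f := by
  rw [signedGraphPoly, map_prod, prod_ne_zero_iff]
  simp only [eval_signedEdgePoly_ne_zero_iff]
  constructor
  · intro h u v huv
    have he : s(u, v) ∈ G.edgeFinset := by simpa using huv
    have hout : s((s(u, v)).out.1, (s(u, v)).out.2) = s(u, v) := Quot.out_eq _
    rcases Sym2.eq_iff.1 hout with ⟨h₁, h₂⟩ | ⟨h₁, h₂⟩
    · simpa [h₁, h₂] using h _ he
    · rw [signedEdge_comm hsym]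
      simpa [h₁, h₂] using h _ he
  · intro h e he
    have hout : s(e.out.1, e.out.2) = e := Quot.out_eq e
    exact h _ _ (by rw [← G.mem_edgeSet, hout]; simpa using he)

theorem totalDegree_signedGraphPoly_le [Fintype G.edgeSet] (c : F) :
    (G.signedGraphPoly ε c).totalDegree ≤ #G.edgeFinset := by
  refine (totalDegree_finsetProd _ _).trans
    ((sum_le_sum fun e _ => ?_).trans_eq (card_eq_sum_ones _).symm)
  rw [signedEdgePoly]
  refine (totalDegree_sub _ _).trans (max_le (totalDegree_X _).le ?_)
  split_ifs
  · exact (totalDegree_X _).le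
  · exact (totalDegree_sub _ _).trans
      (max_le ((totalDegree_C _).le.trans zero_le_one) (totalDegree_X _).le)

end SimpleGraph

theorem subsingleton_fixedPoints_sub {F : Type*} [Field F] {c : F} (hc : (2 : F) = 0 → c ≠ 0) :
    (Function.fixedPoints (c - ·)).Subsingleton := fun a ha b hb => by
  have ha : c - a = a := ha
  have hb : c - b = b := hb
  by_cases h₂ : (2 : F) = 0
  · exact absurd (by linear_combination ha + a * h₂) (hc h₂)
  · exact mul_left_cancel₀ h₂ (by linear_combination hb - ha)

theorem IsPrimePow.exists_field_card {k : ℕ} (hk : IsPrimePow k) :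
    ∃ (F : Type) (_ : Field F) (_ : Fintype F), Fintype.card F = k := by
  obtain ⟨p, a, hp, ha, rfl⟩ := hk
  have : Fact p.Prime := ⟨Nat.prime_iff.2 hp⟩
  let := Fintype.ofFinite (GaloisField p a)
  exact ⟨GaloisField p a, inferInstance, inferInstance, by
    rw [← Nat.card_eq_fintype_card, GaloisField.card p a ha.ne']⟩

theorem stmt_11_general {V : Type} [Fintype V] (G : SimpleGraph V)
    [DecidableRel G.Adj]
    (ε : V → V → ℤ) (hsym : ∀ u v, ε u v = ε v u)
    (hval : ∀ u v, G.Adj u v → ε u v = 1 ∨ ε u v = -1)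
    (n m k : ℕ) (hn : Fintype.card V = n) (hm : G.edgeFinset.card = m)
    (hpp : IsPrimePow k)
    (hχ : ∃ κ : V → ℤ, (∀ v, κ v ∈ signedColorSet k) ∧
      ∀ u v, G.Adj u v → κ v ≠ ε u v * κ u) :
    (k : ℝ) ^ ((n : ℝ) - (m : ℝ) / ((k : ℝ) - 1)) ≤
      (Nat.card {κ : V → ℤ // (∀ v, κ v ∈ signedColorSet k) ∧
        ∀ u v, G.Adj u v → κ v ≠ ε u v * κ u} : ℝ) := by
  classical
  subst hn hm
  obtain ⟨F, _, _, rfl⟩ := hpp.exists_field_card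
  set c : F := if (2 : F) = 0 then 1 else 0
  obtain ⟨e, he⟩ := (involutive_negSignedColor _).exists_equiv_comm (sub_sub_cancel c)
    (subsingleton_fixedPoints_negSignedColor _)
    (subsingleton_fixedPoints_sub fun h => by simp [c, h])
    (by rw [Nat.card_signedColorSet, Nat.card_eq_fintype_card])
  set E := (SimpleGraph.signedColoringsEquiv hval _).trans (G.signedColoringsCongr ε e he)
  obtain ⟨κ₀, hκ₀⟩ := hχ
  have hP : ∃ x, eval x (G.signedGraphPoly ε c) ≠ 0 :=
    ⟨_, (SimpleGraph.eval_signedGraphPoly_ne_zero_iff (G := G) hsym c _).2 (E ⟨κ₀, hκ₀⟩).2⟩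
  rw [Nat.card_congr E, Nat.card_eq_fintype_card, Fintype.card_subtype]
  simp only [← SimpleGraph.eval_signedGraphPoly_ne_zero_iff (G := G) hsym]
  exact rpow_le_card_eval_ne_zero hP (by exact_mod_cast G.totalDegree_signedGraphPoly_le c)

/-- For a signed graph `(G, ε)` with `χ(G,ε) ≤ k`, `k` a prime power and
`m ≤ (k-1)n`, the number of `k`-colorings of `(G, ε)` is at least `k^(n - m/(k-1))`. -/
theorem stmt_11 {V : Type} [Fintype V] [DecidableEq V] (G : SimpleGraph V)
    [DecidableRel G.Adj]
    (ε : V → V → ℤ) (hsym : ∀ u v, ε u v = ε v u)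
    (hval : ∀ u v, G.Adj u v → ε u v = 1 ∨ ε u v = -1)
    (n m k : ℕ) (hn : Fintype.card V = n) (hm : G.edgeFinset.card = m)
    (hpp : IsPrimePow k)
    (hχ : ∃ κ : V → ℤ, (∀ v, κ v ∈ signedColorSet k) ∧
      ∀ u v, G.Adj u v → κ v ≠ ε u v * κ u)
    (hmn : (m : ℝ) ≤ ((k : ℝ) - 1) * n) :
    (k : ℝ) ^ ((n : ℝ) - (m : ℝ) / ((k : ℝ) - 1)) ≤
      (Nat.card {κ : V → ℤ // (∀ v, κ v ∈ signedColorSet k) ∧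
        ∀ u v, G.Adj u v → κ v ≠ ε u v * κ u} : ℝ) :=
  stmt_11_general G ε hsym hval n m k hn hm hpp hχ
end
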